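/- arXiv:1712.02606 — 4 statements merged into one kernel-verified Lean document; each statement's English description precedes it below -/
import Mathlib

section
/- Let p and q be coprime positive integers. If (r₁, s₁, k) and (r₂, s₂) satisfy r₁, r₂ ∈ {0,...,q−1}, s₁, s₂ ∈ {0,...,p−1}, k ∈ ℤ, and (r₁, s₁, k) ≠ (r₂, s₂, 0), then the intervals [r₁/q + s₁/p, r₁/q + s₁/p + 1/(pq)) and [k + r₂/q + s₂/p, k + r₂/q + s₂/p + 1/(pq)) are disjoint. -/
/-!
Scaling by `p * q`, the two intervals are `[n₁, n₁ + 1)` and `[n₂, n₂ + 1)` with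
`n₁ = r₁ p + s₁ q` and `n₂ = k p q + r₂ p + s₂ q`, so it suffices that `n₁ ≠ n₂`.
Modulo `p` an equality `n₁ = n₂` gives `s₁ q ≡ s₂ q`, hence `s₁ = s₂` since `q` is
invertible mod `p` and `s₁, s₂ < p`; symmetrically `r₁ = r₂`, and then `k = 0`.
-/

open Set

theorem Set.disjoint_Ico_intCast_div {α : Type*} [Field α] [LinearOrder α]
    [IsStrictOrderedRing α] (N : α) {m n : ℤ} (hmn : m ≠ n) :
    Disjoint (Ico ((m : α) / N) (m / N + 1 / N)) (Ico ((n : α) / N) (n / N + 1 / N)) := by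
  simpa only [Function.onFun, zero_add, zsmul_eq_mul, mul_one_div, Int.cast_add, Int.cast_one,
    add_div] using
    pairwise_disjoint_Ico_add_zsmul (0 : α) (1 / N) hmn

theorem eq_of_mul_add_mul_eq {p q s₁ s₂ : ℕ} (hco : p.Coprime q)
    (hs₁ : s₁ < p) (hs₂ : s₂ < p) {r₁ r₂ : ℕ} {k : ℤ}
    (h : (r₁ * p + s₁ * q : ℤ) = k * (p * q) + r₂ * p + s₂ * q) : s₁ = s₂ := by
  have hmod : ((s₁ * q : ℕ) : ℤ) ≡ (s₂ * q : ℕ) [ZMOD p] :=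
    Int.modEq_iff_dvd.2 ⟨r₁ - r₂ - k * q, by push_cast; linear_combination -h⟩
  exact ((Int.natCast_modEq_iff.1 hmod).cancel_right_of_coprime hco).eq_of_lt_of_lt hs₁ hs₂

theorem eq_and_eq_and_eq_zero_of_mul_add_mul_eq {p q r₁ r₂ s₁ s₂ : ℕ} (hco : p.Coprime q)
    (hr₁ : r₁ < q) (hr₂ : r₂ < q) (hs₁ : s₁ < p) (hs₂ : s₂ < p) {k : ℤ}
    (h : (r₁ * p + s₁ * q : ℤ) = k * (p * q) + r₂ * p + s₂ * q) :
    r₁ = r₂ ∧ s₁ = s₂ ∧ k = 0 := by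
  have hs : s₁ = s₂ := eq_of_mul_add_mul_eq hco hs₁ hs₂ h
  have hr : r₁ = r₂ :=
    eq_of_mul_add_mul_eq hco.symm hr₁ hr₂ (r₁ := s₁) (r₂ := s₂) (k := k)
      (by linear_combination h)
  subst hs hr
  have hpq : (p * q : ℤ) ≠ 0 := mul_ne_zero (by omega) (by omega)
  exact ⟨rfl, rfl, by simpa [hpq] using h⟩

theorem stmt_1 (p q : ℕ) (hp : 0 < p) (hq : 0 < q) (hco : Nat.Coprime p q)
    (r₁ r₂ s₁ s₂ : ℕ) (hr₁ : r₁ ≤ q - 1) (hr₂ : r₂ ≤ q - 1)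
    (hs₁ : s₁ ≤ p - 1) (hs₂ : s₂ ≤ p - 1) (k : ℤ)
    (hne : (r₁, s₁, k) ≠ (r₂, s₂, 0)) :
    Disjoint
      (Ico ((r₁ : ℝ) / q + (s₁ : ℝ) / p) ((r₁ : ℝ) / q + (s₁ : ℝ) / p + 1 / (p * q)))
      (Ico ((k : ℝ) + (r₂ : ℝ) / q + (s₂ : ℝ) / p)
        ((k : ℝ) + (r₂ : ℝ) / q + (s₂ : ℝ) / p + 1 / (p * q))) := by
  have hn : (r₁ * p + s₁ * q : ℤ) ≠ k * (p * q) + r₂ * p + s₂ * q := fun h => by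
    obtain ⟨rfl, rfl, rfl⟩ :=
      eq_and_eq_and_eq_zero_of_mul_add_mul_eq hco (by omega) (by omega) (by omega) (by omega) h
    exact hne rfl
  have hp' : (p : ℝ) ≠ 0 := by positivity
  have hq' : (q : ℝ) ≠ 0 := by positivity
  have h₁ : (r₁ : ℝ) / q + s₁ / p = ((r₁ * p + s₁ * q : ℤ) : ℝ) / (p * q) := by
    push_cast; field_simp
  have h₂ : (k : ℝ) + r₂ / q + s₂ / p = ((k * (p * q) + r₂ * p + s₂ * q : ℤ) : ℝ) / (p * q) := by
    push_cast; field_simp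
  rw [h₁, h₂]
  exact disjoint_Ico_intCast_div _ hn
end

section
/- Let a, b > 1 with log_b a = p/q where p, q are coprime positive integers, and β = b^p = a^q. Then the union ⋃_{r=0}^{q−1} ⋃_{s=0}^{p−1} a^r·b^s·[1, a^{1/p}) is β^ℤ-dilation congruent to [1, β): there is a measurable partition {Tₖ}_{k∈ℤ} of the union such that {βᵏ·Tₖ} is a partition of [1, β) up to null sets. -/
open Set MeasureTheory

/-- `P` is a partition of `T` up to Lebesgue-null sets. -/
def IsAEPartition (T : Set ℝ) (P : ℤ → Set ℝ) : Prop :=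
  (∀ k, MeasurableSet (P k)) ∧
  (∀ j k : ℤ, j ≠ k → volume (P j ∩ P k) = 0) ∧
  volume (symmDiff T (⋃ k, P k)) = 0

/-- `T₁` is `α^ℤ`-dilation congruent to `T₂` (up to null sets). -/
def DilationCongruent (α : ℝ) (T₁ T₂ : Set ℝ) : Prop :=
  ∃ P : ℤ → Set ℝ, IsAEPartition T₁ P ∧
    IsAEPartition T₂ (fun k => (fun x => α ^ k * x) '' P k)

private lemma img_Ico (c u v : ℝ) (hc : 0 < c) :
    (fun x => c * x) '' Ico u v = Ico (c*u) (c*v) := by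
  ext x
  simp only [mem_image, mem_Ico]
  constructor
  · rintro ⟨y, ⟨h1, h2⟩, rfl⟩
    exact ⟨by nlinarith, by nlinarith⟩
  · rintro ⟨h1, h2⟩
    refine ⟨x / c, ⟨?_, ?_⟩, by field_simp⟩
    · rw [le_div_iff₀ hc]; nlinarith
    · rw [div_lt_iff₀ hc]; nlinarith

private def Ipow (γ : ℝ) (m : ℕ) : Set ℝ := Set.Ico (γ^m) (γ^(m+1))

private lemma Ipow_meas (γ : ℝ) (m : ℕ) : MeasurableSet (Ipow γ m) := measurableSet_Ico

private lemma Ipow_disj {γ : ℝ} (hγ : 1 < γ) {m m' : ℕ} (h : m ≠ m') :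
    Ipow γ m ∩ Ipow γ m' = ∅ := by
  have key : ∀ u v : ℕ, u < v → Ipow γ u ∩ Ipow γ v = ∅ := by
    intro u v huv
    have hle : γ^(u+1) ≤ γ^v := pow_le_pow_right₀ hγ.le huv
    apply eq_empty_iff_forall_notMem.2
    rintro x ⟨⟨_, h2⟩, h3, _⟩
    linarith
  rcases h.lt_or_gt with hlt | hlt
  · exact key _ _ hlt
  · rw [inter_comm]; exact key _ _ hlt

private lemma mem_Ipow_tile {γ : ℝ} (hγ : 1 < γ) :
    ∀ (M : ℕ) (x : ℝ), x ∈ Ico 1 (γ^M) ↔ ∃ m, m < M ∧ x ∈ Ipow γ m := by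
  intro M
  induction M with
  | zero =>
    intro x
    simp only [pow_zero, mem_Ico]
    constructor
    · rintro ⟨h1, h2⟩; linarith
    · rintro ⟨m, hm, _⟩; omega
  | succ M ih =>
    intro x
    constructor
    · rintro ⟨h1, h2⟩
      by_cases hx : x < γ^M
      · obtain ⟨m, hm, hmx⟩ := (ih x).mp ⟨h1, hx⟩
        exact ⟨m, by omega, hmx⟩
      · exact ⟨M, by omega, not_lt.1 hx, h2⟩
    · rintro ⟨m, hm, h1, h2⟩
      refine ⟨le_trans (one_le_pow₀ hγ.le) h1, lt_of_lt_of_le h2 ?_⟩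
      exact pow_le_pow_right₀ hγ.le (by omega)

private lemma Ipow_shift {γ : ℝ} (hγ0 : 0 < γ) (N m : ℕ) :
    (fun x => (γ^N)⁻¹ * x) '' Ipow γ (N + m) = Ipow γ m := by
  have hN : (γ:ℝ)^N ≠ 0 := by positivity
  rw [Ipow, Ipow, img_Ico _ _ _ (by positivity),
    show N + m + 1 = N + (m+1) by omega, pow_add γ N m, pow_add γ N (m+1),
    inv_mul_cancel_left₀ hN, inv_mul_cancel_left₀ hN]

private lemma nt_inj {p q : ℕ} (hco : Nat.Coprime p q)
    {r s r' s' : ℕ} (hr : r < q) (hs : s < p) (hr' : r' < q) (hs' : s' < p)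
    (h : (p*r+q*s) % (p*q) = (p*r'+q*s') % (p*q)) : r = r' ∧ s = s' := by
  have hmod : ∀ {n : ℕ}, n ∣ p*q → (p*r+q*s) % n = (p*r'+q*s') % n := by
    intro n hn
    exact Nat.ModEq.of_dvd hn h
  constructor
  · have h1 : (p*r) % q = (p*r') % q := by
      have e1 : (p*r+q*s) % q = (p*r) % q := by
        rw [mul_comm q s, Nat.add_mul_mod_self_right]
      have e2 : (p*r'+q*s') % q = (p*r') % q := by
        rw [mul_comm q s', Nat.add_mul_mod_self_right]
      rw [← e1, ← e2]; exact hmod ⟨p, mul_comm p q⟩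
    have h2 : r ≡ r' [MOD q] := Nat.ModEq.cancel_left_of_coprime hco.symm h1
    exact h2.eq_of_lt_of_lt hr hr'
  · have h1 : (q*s) % p = (q*s') % p := by
      have e1 : (p*r+q*s) % p = (q*s) % p := by
        rw [Nat.mul_add_mod]
      have e2 : (p*r'+q*s') % p = (q*s') % p := by
        rw [Nat.mul_add_mod]
      rw [← e1, ← e2]; exact hmod ⟨q, rfl⟩
    have h2 : s ≡ s' [MOD p] := Nat.ModEq.cancel_left_of_coprime hco h1
    exact h2.eq_of_lt_of_lt hs hs'

private lemma nt_surj {p q : ℕ} (hp : 0 < p) (hq : 0 < q) (hco : Nat.Coprime p q) :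
    ∀ m < p*q, ∃ r s, r < q ∧ s < p ∧ (p*r+q*s) % (p*q) = m := by
  classical
  have hpq : 0 < p*q := Nat.mul_pos hp hq
  set F := (Finset.range q) ×ˢ (Finset.range p) with hF
  set f : ℕ×ℕ → ℕ := fun rs => (p*rs.1+q*rs.2) % (p*q) with hf
  have hsub : F.image f ⊆ Finset.range (p*q) := by
    intro m hm
    simp only [Finset.mem_image] at hm
    obtain ⟨rs, _, rfl⟩ := hm
    exact Finset.mem_range.2 (Nat.mod_lt _ hpq)
  have hinj : Set.InjOn f ↑F := by
    rintro ⟨r, s⟩ hx ⟨r', s'⟩ hy hxy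
    simp only [hF, Finset.coe_product, Set.mem_prod, Finset.coe_range, Set.mem_Iio] at hx hy
    obtain ⟨h1, h2⟩ := nt_inj hco hx.1 hx.2 hy.1 hy.2 hxy
    simp [h1, h2]
  have hcard : (F.image f).card = p*q := by
    rw [Finset.card_image_of_injOn hinj, hF, Finset.card_product]
    simp [mul_comm]
  have heq : F.image f = Finset.range (p*q) :=
    Finset.eq_of_subset_of_card_le hsub (by rw [hcard, Finset.card_range])
  intro m hm
  have : m ∈ F.image f := heq ▸ Finset.mem_range.2 hm
  simp only [Finset.mem_image, hF, Finset.mem_product, Finset.mem_range] at this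
  obtain ⟨⟨r, s⟩, ⟨hr, hs⟩, hfeq⟩ := this
  exact ⟨r, s, hr, hs, hfeq⟩

private def PT (γ : ℝ) (p q : ℕ) : ℤ → Set ℝ := fun k =>
  if k = 0 then ⋃ (r : ℕ) (s : ℕ) (_ : r < q ∧ s < p ∧ p*r+q*s < p*q), Ipow γ (p*r+q*s)
  else if k = -1 then ⋃ (r : ℕ) (s : ℕ) (_ : r < q ∧ s < p ∧ p*q ≤ p*r+q*s), Ipow γ (p*r+q*s)
  else ∅

private lemma PT_zero (γ : ℝ) (p q : ℕ) :
    PT γ p q 0 = ⋃ (r : ℕ) (s : ℕ) (_ : r < q ∧ s < p ∧ p*r+q*s < p*q), Ipow γ (p*r+q*s) := by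
  simp [PT]

private lemma PT_neg_one (γ : ℝ) (p q : ℕ) :
    PT γ p q (-1) = ⋃ (r : ℕ) (s : ℕ) (_ : r < q ∧ s < p ∧ p*q ≤ p*r+q*s), Ipow γ (p*r+q*s) := by
  simp [PT]

private lemma PT_empty (γ : ℝ) (p q : ℕ) {k : ℤ} (h0 : k ≠ 0) (h1 : k ≠ -1) :
    PT γ p q k = ∅ := by simp [PT, h0, h1]

theorem stmt_6 (a b : ℝ) (ha : 1 < a) (hb : 1 < b) (p q : ℕ)
    (hp : 0 < p) (hq : 0 < q) (hco : Nat.Coprime p q)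
    (hlog : Real.logb b a = (p : ℝ) / q)
    (β : ℝ) (hβ : β = b ^ p) :
    DilationCongruent β
      (⋃ r ∈ Finset.range q, ⋃ s ∈ Finset.range p,
        (fun x => a ^ r * b ^ s * x) '' Ico 1 (a ^ ((1 : ℝ) / p)))
      (Ico 1 β) := by
  classical
  have ha0 : (0:ℝ) < a := lt_trans one_pos ha
  have hb0 : (0:ℝ) < b := lt_trans one_pos hb
  have hp0 : (p:ℝ) ≠ 0 := Nat.cast_ne_zero.mpr hp.ne'
  have hq0 : (q:ℝ) ≠ 0 := Nat.cast_ne_zero.mpr hq.ne'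
  have hpq : 0 < p * q := Nat.mul_pos hp hq
  set γ : ℝ := a ^ ((1:ℝ)/(p:ℝ)) with hγdef
  have hγ1 : 1 < γ := by
    rw [hγdef, Real.one_lt_rpow_iff_of_pos ha0]
    exact Or.inl ⟨ha, by positivity⟩
  have hγ0 : 0 < γ := lt_trans one_pos hγ1
  have hγp : γ ^ p = a := by
    rw [hγdef, ← Real.rpow_natCast (a ^ ((1:ℝ)/(p:ℝ))) p, ← Real.rpow_mul ha0.le,
      one_div, inv_mul_cancel₀ hp0, Real.rpow_one]
  have hab : a = b ^ ((p:ℝ)/(q:ℝ)) := by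
    conv_lhs => rw [← Real.rpow_logb hb0 hb.ne' ha0]
    rw [hlog]
  have hγq : γ ^ q = b := by
    have hγb : γ = b ^ ((1:ℝ)/(q:ℝ)) := by
      rw [hγdef, hab, ← Real.rpow_mul hb0.le]
      congr 1
      field_simp
    rw [hγb, ← Real.rpow_natCast (b ^ ((1:ℝ)/(q:ℝ))) q, ← Real.rpow_mul hb0.le,
      one_div, inv_mul_cancel₀ hq0, Real.rpow_one]
  have hβγ : β = γ ^ (p*q) := by
    rw [hβ, ← hγq, ← pow_mul, mul_comm q p]
  -- bound on exponents
  have hbound : ∀ {r s : ℕ}, r < q → s < p → p*r+q*s < p*q + p*q := by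
    intro r s hr hs
    have h1 : p*r < p*q := mul_lt_mul_of_pos_left hr hp
    have h2 : q*s < q*p := mul_lt_mul_of_pos_left hs hq
    have h3 : q*p = p*q := mul_comm q p
    omega
  -- pieces
  have hpiece : ∀ r s : ℕ, (fun x => a ^ r * b ^ s * x) '' Ico 1 γ = Ipow γ (p*r + q*s) := by
    intro r s
    have hc : a ^ r * b ^ s = γ ^ (p*r + q*s) := by
      rw [← hγp, ← hγq, ← pow_mul, ← pow_mul, ← pow_add]
    have hcpos : (0:ℝ) < a ^ r * b ^ s := by positivity
    rw [img_Ico _ _ _ hcpos, hc, mul_one, Ipow, ← pow_succ]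
  -- key subsets
  have hP0sub : PT γ p q 0 ⊆ Ico 1 (γ^(p*q)) := by
    intro x hx
    rw [PT_zero] at hx
    simp only [mem_iUnion] at hx
    obtain ⟨r, s, ⟨hr, hs, hlt⟩, hxI⟩ := hx
    exact (mem_Ipow_tile hγ1 (p*q) x).mpr ⟨_, hlt, hxI⟩
  have hP1sub : PT γ p q (-1) ⊆ {x | γ^(p*q) ≤ x} := by
    intro x hx
    rw [PT_neg_one] at hx
    simp only [mem_iUnion] at hx
    obtain ⟨r, s, ⟨hr, hs, hge⟩, hxI⟩ := hx
    have h1 : γ^(p*q) ≤ γ^(p*r+q*s) := pow_le_pow_right₀ hγ1.le hge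
    exact le_trans h1 hxI.1
  -- computed image of PT (-1)
  have himg1 : ∀ m : ℕ, p*q ≤ m → (fun x => β^(-1:ℤ) * x) '' Ipow γ m = Ipow γ (m - p*q) := by
    intro m hm
    obtain ⟨d, rfl⟩ : ∃ d, m = p*q + d := ⟨m - p*q, by omega⟩
    have hβinv : β^(-1:ℤ) = (γ^(p*q))⁻¹ := by rw [zpow_neg_one, hβγ]
    rw [hβinv, Ipow_shift hγ0, Nat.add_sub_cancel_left]
  have hQ1 : (fun x => β^(-1:ℤ) * x) '' PT γ p q (-1)
      = ⋃ (r : ℕ) (s : ℕ) (_ : r < q ∧ s < p ∧ p*q ≤ p*r+q*s), Ipow γ (p*r+q*s - p*q) := by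
    rw [PT_neg_one]
    simp only [image_iUnion]
    exact iUnion_congr fun r => iUnion_congr fun s => iUnion_congr fun h => himg1 _ h.2.2
  have hQ0 : (fun x => β^(0:ℤ) * x) '' PT γ p q 0 = PT γ p q 0 := by
    simp
  -- T1 = PT 0 ∪ PT (-1)
  have hT1 : (⋃ r ∈ Finset.range q, ⋃ s ∈ Finset.range p,
        (fun x => a ^ r * b ^ s * x) '' Ico 1 γ) = PT γ p q 0 ∪ PT γ p q (-1) := by
    ext x
    simp only [mem_iUnion, Finset.mem_range, mem_union, exists_prop]
    rw [PT_zero, PT_neg_one]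
    simp only [mem_iUnion]
    constructor
    · rintro ⟨r, hr, s, hs, hx⟩
      rw [hpiece] at hx
      by_cases hlt : p*r+q*s < p*q
      · exact Or.inl ⟨r, s, ⟨hr, hs, hlt⟩, hx⟩
      · exact Or.inr ⟨r, s, ⟨hr, hs, by omega⟩, hx⟩
    · rintro (⟨r, s, ⟨hr, hs, _⟩, hx⟩ | ⟨r, s, ⟨hr, hs, _⟩, hx⟩) <;>
        exact ⟨r, hr, s, hs, (hpiece r s) ▸ hx⟩
  have hUnionP : (⋃ k : ℤ, PT γ p q k) = PT γ p q 0 ∪ PT γ p q (-1) := by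
    apply subset_antisymm
    · intro x hx
      obtain ⟨k, hk⟩ := mem_iUnion.1 hx
      by_cases h0 : k = 0
      · exact Or.inl (h0 ▸ hk)
      by_cases h1 : k = -1
      · exact Or.inr (h1 ▸ hk)
      · rw [PT_empty γ p q h0 h1] at hk
        exact absurd hk (notMem_empty x)
    · rintro x (h | h)
      · exact mem_iUnion.2 ⟨0, h⟩
      · exact mem_iUnion.2 ⟨-1, h⟩
  have hdisj01 : PT γ p q 0 ∩ PT γ p q (-1) = ∅ := by
    apply eq_empty_iff_forall_notMem.2
    rintro x ⟨h1, h2⟩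
    have ha1 := (hP0sub h1).2
    have ha2 := hP1sub h2
    simp only [mem_setOf_eq] at ha2
    linarith
  refine ⟨PT γ p q, ⟨?_, ?_, ?_⟩, ⟨?_, ?_, ?_⟩⟩
  · -- measurability of PT k
    intro k
    by_cases h0 : k = 0
    · subst h0
      rw [PT_zero]
      exact MeasurableSet.iUnion fun r => MeasurableSet.iUnion fun s =>
        MeasurableSet.iUnion fun _ => Ipow_meas γ _
    by_cases h1 : k = -1
    · subst h1
      rw [PT_neg_one]
      exact MeasurableSet.iUnion fun r => MeasurableSet.iUnion fun s =>
        MeasurableSet.iUnion fun _ => Ipow_meas γ _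
    · rw [PT_empty γ p q h0 h1]; exact MeasurableSet.empty
  · -- pairwise disjoint
    intro j k hjk
    rcases eq_or_ne j 0 with rfl | hj0
    · rcases eq_or_ne k (-1) with rfl | hk1
      · rw [hdisj01]; simp
      · rw [PT_empty γ p q (Ne.symm hjk) hk1, inter_empty]; simp
    rcases eq_or_ne j (-1) with rfl | hj1
    · rcases eq_or_ne k 0 with rfl | hk0
      · rw [inter_comm, hdisj01]; simp
      · rcases eq_or_ne k (-1) with rfl | hk1
        · exact absurd rfl hjk
        · rw [PT_empty γ p q hk0 hk1, inter_empty]; simp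
    · rw [PT_empty γ p q hj0 hj1, empty_inter]; simp
  · -- symmDiff T1
    rw [hUnionP, ← hT1, symmDiff_self]
    simp
  · -- measurability of images
    intro k
    dsimp only
    by_cases h0 : k = 0
    · subst h0
      rw [hQ0, PT_zero]
      exact MeasurableSet.iUnion fun r => MeasurableSet.iUnion fun s =>
        MeasurableSet.iUnion fun _ => Ipow_meas γ _
    by_cases h1 : k = -1
    · subst h1
      rw [hQ1]
      exact MeasurableSet.iUnion fun r => MeasurableSet.iUnion fun s =>
        MeasurableSet.iUnion fun _ => Ipow_meas γ _
    · rw [PT_empty γ p q h0 h1, image_empty]; exact MeasurableSet.empty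
  · -- pairwise disjoint images
    intro j k hjk
    dsimp only
    have hQdisj : ((fun x => β^(0:ℤ) * x) '' PT γ p q 0) ∩
        ((fun x => β^(-1:ℤ) * x) '' PT γ p q (-1)) = ∅ := by
      rw [hQ0, hQ1, PT_zero]
      apply eq_empty_iff_forall_notMem.2
      rintro x ⟨hx0, hx1⟩
      simp only [mem_iUnion] at hx0 hx1
      obtain ⟨r, s, ⟨hr, hs, hlt⟩, hxI⟩ := hx0
      obtain ⟨r', s', ⟨hr', hs', hge⟩, hxI'⟩ := hx1
      have hb2 : p*r'+q*s' < p*q + p*q := hbound hr' hs'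
      by_cases heq : p*r+q*s = p*r'+q*s' - p*q
      · have hmodeq : (p*r+q*s) % (p*q) = (p*r'+q*s') % (p*q) := by
          rw [Nat.mod_eq_of_lt hlt, Nat.mod_eq_sub_mod hge, Nat.mod_eq_of_lt (by omega)]
          exact heq
        obtain ⟨hre, hse⟩ := nt_inj hco hr hs hr' hs' hmodeq
        subst hre; subst hse
        omega
      · have hd := Ipow_disj hγ1 heq
        exact absurd (mem_inter hxI hxI') (by rw [hd]; exact notMem_empty x)
    rcases eq_or_ne j 0 with rfl | hj0
    · rcases eq_or_ne k (-1) with rfl | hk1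
      · rw [hQdisj]; simp
      · rw [PT_empty γ p q (Ne.symm hjk) hk1, image_empty, inter_empty]; simp
    rcases eq_or_ne j (-1) with rfl | hj1
    · rcases eq_or_ne k 0 with rfl | hk0
      · rw [inter_comm, hQdisj]; simp
      · rcases eq_or_ne k (-1) with rfl | hk1
        · exact absurd rfl hjk
        · rw [PT_empty γ p q hk0 hk1, image_empty, inter_empty]; simp
    · rw [PT_empty γ p q hj0 hj1, image_empty, empty_inter]; simp
  · -- symmDiff [1, β)
    have hUQ : (⋃ k : ℤ, (fun x => β^k * x) '' PT γ p q k) = Ico 1 β := by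
      apply subset_antisymm
      · intro x hx
        obtain ⟨k, hk⟩ := mem_iUnion.1 hx
        rw [hβγ]
        by_cases h0 : k = 0
        · subst h0
          rw [hQ0] at hk
          exact hP0sub hk
        by_cases h1 : k = -1
        · subst h1
          rw [hQ1] at hk
          simp only [mem_iUnion] at hk
          obtain ⟨r, s, ⟨hr, hs, hge⟩, hxI⟩ := hk
          have hb2 : p*r+q*s < p*q + p*q := hbound hr hs
          exact (mem_Ipow_tile hγ1 (p*q) x).mpr ⟨_, by omega, hxI⟩
        · rw [PT_empty γ p q h0 h1, image_empty] at hk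
          exact absurd hk (notMem_empty x)
      · intro x hx
        rw [hβγ] at hx
        obtain ⟨m, hm, hxm⟩ := (mem_Ipow_tile hγ1 (p*q) x).mp hx
        obtain ⟨r, s, hr, hs, hmod⟩ := nt_surj hp hq hco m hm
        by_cases hlt : p*r+q*s < p*q
        · refine mem_iUnion.2 ⟨0, ?_⟩
          rw [hQ0, PT_zero]
          simp only [mem_iUnion]
          rw [Nat.mod_eq_of_lt hlt] at hmod
          exact ⟨r, s, ⟨hr, hs, hlt⟩, hmod ▸ hxm⟩
        · refine mem_iUnion.2 ⟨-1, ?_⟩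
          rw [hQ1]
          simp only [mem_iUnion]
          have hge : p*q ≤ p*r+q*s := by omega
          have hb2 : p*r+q*s < p*q + p*q := hbound hr hs
          rw [Nat.mod_eq_sub_mod hge, Nat.mod_eq_of_lt (by omega)] at hmod
          exact ⟨r, s, ⟨hr, hs, hge⟩, hmod ▸ hxm⟩
    rw [hUQ, symmDiff_self]
    simp
end

section
/- Let a, b > 1 with log_b a = p/q, p, q coprime positive integers, β = b^p, and ψ ∈ L²((0,∞)) with Θ_β-transform matrix Ψ(x,ξ) = (a^{r/2} b^{s/2} Θ_β ψ(a^r b^s x, ξ))_{r∈{0,...,q−1}, s∈{0,...,p−1}}. Then for all (l, m) ∈ ℤ × {0,...,q−1} and a.e. (x, ξ): Ψ(a^{lq+m} x, ξ) = a^{−(lq+m)/2} e^{2πilξ} U_m(ξ) Ψ(x, ξ), where U_m(ξ) is the q×q block matrix with I_{q−m} in the top-right block and e^{2πiξ} I_m in the bottom-left block. -/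
open Set MeasureTheory Complex

/-- The `Θ_β`-transform: `Θ_β f (x, ξ) = ∑_{l ∈ ℤ} β^{l/2} f(β^l x) e^{-2πilξ}`. -/
noncomputable def thetaTransform (β : ℝ) (f : ℝ → ℂ) (x ξ : ℝ) : ℂ :=
  ∑' l : ℤ, (Real.sqrt (β ^ l) : ℂ) * f (β ^ l * x) *
    Complex.exp (-(2 * Real.pi * Complex.I * (l : ℂ) * (ξ : ℂ)))

/-- The `Θ_β`-transform matrix `Ψ(x,ξ) = (a^{r/2} b^{s/2} Θ_β ψ(a^r b^s x, ξ))_{r,s}`. -/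
noncomputable def psiMatrix (a b β : ℝ) (p q : ℕ) (ψ : ℝ → ℂ) (x ξ : ℝ) :
    Matrix (Fin q) (Fin p) ℂ :=
  fun r s => (Real.sqrt (a ^ (r : ℕ) * b ^ (s : ℕ)) : ℂ) *
    thetaTransform β ψ (a ^ (r : ℕ) * b ^ (s : ℕ) * x) ξ

/-- The matrix `U_m(ξ)` with `I_{q-m}` in the top-right block and
`e^{2πiξ} I_m` in the bottom-left block. -/
noncomputable def Umat (q m : ℕ) (ξ : ℝ) : Matrix (Fin q) (Fin q) ℂ :=
  fun i j =>
    if (i : ℕ) < q - m then (if (j : ℕ) = (i : ℕ) + m then 1 else 0)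
    else (if (j : ℕ) + (q - m) = (i : ℕ) then
      Complex.exp (2 * Real.pi * Complex.I * (ξ : ℂ)) else 0)

/-!
Since `a ^ q = b ^ p = β`, dilating by `a ^ (l q + m)` moves row `r` of `Ψ` to row `r + l q + m`.
The transform is quasi-periodic, `√β Θ_β f (β x, ξ) = e^{2πiξ} Θ_β f (x, ξ)` (reindex the series),
so reducing the row index `r + m` modulo `q` costs the phase `e^{2πilξ}`, or `e^{2πi(l+1)ξ}` when
`r + m` wraps around; the latter extra factor `e^{2πiξ}` is the bottom-left block of `U_m`.
-/
lemma pow_eq_pow_of_logb_eq {a b : ℝ} {p q : ℕ} (ha : 0 < a) (hb : 0 < b) (hb1 : b ≠ 1)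
    (hq : q ≠ 0) (hlog : Real.logb b a = (p : ℝ) / q) : a ^ q = b ^ p := by
  rw [← Real.rpow_logb hb hb1 ha, hlog, ← Real.rpow_mul_natCast hb.le,
    div_mul_cancel₀ _ (Nat.cast_ne_zero.2 hq), Real.rpow_natCast]

lemma sqrt_mul_thetaTransform_zpow_mul {β : ℝ} (hβ : 0 < β) (f : ℝ → ℂ) (x ξ : ℝ) (k : ℤ) :
    (Real.sqrt (β ^ k) : ℂ) * thetaTransform β f (β ^ k * x) ξ =
      Complex.exp (2 * Real.pi * Complex.I * k * ξ) * thetaTransform β f x ξ := by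
  unfold thetaTransform
  rw [← tsum_mul_left, ← tsum_mul_left, eq_comm, ← (Equiv.addRight k).tsum_eq]
  refine tsum_congr fun n => ?_
  rw [Equiv.coe_addRight, zpow_add₀ hβ.ne', mul_assoc (β ^ n), Real.sqrt_mul (zpow_nonneg hβ.le n),
    Complex.ofReal_mul]
  have hexp : Complex.exp (2 * Real.pi * Complex.I * k * ξ) *
      Complex.exp (-(2 * Real.pi * Complex.I * ((n + k : ℤ) : ℂ) * ξ)) =
      Complex.exp (-(2 * Real.pi * Complex.I * n * ξ)) := by
    rw [← Complex.exp_add]; push_cast; ring_nf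
  rw [← hexp]; ring

lemma sqrt_mul_thetaTransform_pow_zpow_add {a : ℝ} (ha : 0 < a) (q : ℕ) (f : ℝ → ℂ)
    (x ξ : ℝ) (n K : ℤ) :
    (Real.sqrt (a ^ (n + q * K)) : ℂ) * thetaTransform (a ^ q) f (a ^ (n + q * K) * x) ξ =
      Complex.exp (2 * Real.pi * Complex.I * K * ξ) *
        ((Real.sqrt (a ^ n) : ℂ) * thetaTransform (a ^ q) f (a ^ n * x) ξ) := by
  have hsplit : a ^ (n + q * K) = (a ^ q) ^ K * a ^ n := by
    rw [add_comm, zpow_add₀ ha.ne', zpow_mul, zpow_natCast]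
  rw [hsplit, Real.sqrt_mul (zpow_nonneg (pow_nonneg ha.le q) K), Complex.ofReal_mul, mul_assoc,
    mul_assoc, mul_left_comm, sqrt_mul_thetaTransform_zpow_mul (pow_pos ha q)]
  ring

lemma psiMatrix_zpow_mul_apply {a : ℝ} (ha : 0 < a) (b : ℝ) (p q : ℕ) (ψ : ℝ → ℂ) (x ξ : ℝ)
    {j K : ℤ} {r r' : Fin q} (s : Fin p) (h : (r : ℤ) + j = q * K + r') :
    psiMatrix a b (a ^ q) p q ψ (a ^ j * x) ξ r s =
      ((Real.sqrt (a ^ j) : ℂ)⁻¹ * Complex.exp (2 * Real.pi * Complex.I * K * ξ)) *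
        psiMatrix a b (a ^ q) p q ψ x ξ r' s := by
  have key := sqrt_mul_thetaTransform_pow_zpow_add ha q ψ (b ^ (s : ℕ) * x) ξ r' K
  rw [add_comm, ← h, zpow_add₀ ha.ne', zpow_natCast, zpow_natCast,
    Real.sqrt_mul (pow_nonneg ha.le _), Complex.ofReal_mul] at key
  have hj : (Real.sqrt (a ^ j) : ℂ) ≠ 0 := by
    exact_mod_cast (Real.sqrt_pos.2 (zpow_pos ha j)).ne'
  simp only [psiMatrix]
  rw [Real.sqrt_mul (pow_nonneg ha.le _), Real.sqrt_mul (pow_nonneg ha.le _), Complex.ofReal_mul,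
    Complex.ofReal_mul, show a ^ (r : ℕ) * b ^ (s : ℕ) * (a ^ j * x) =
      a ^ (r : ℕ) * a ^ j * (b ^ (s : ℕ) * x) by ring,
    show a ^ (r' : ℕ) * b ^ (s : ℕ) * x = a ^ (r' : ℕ) * (b ^ (s : ℕ) * x) by ring,
    eq_comm, mul_assoc, inv_mul_eq_iff_eq_mul₀ hj]
  linear_combination -(Real.sqrt (b ^ (s : ℕ)) : ℂ) * key

lemma Umat_mul_apply {q m : ℕ} (hm : m < q) {α : Type*} (M : Matrix (Fin q) α ℂ) (ξ : ℝ)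
    (r : Fin q) (s : α) :
    (Umat q m ξ * M) r s =
      if h : (r : ℕ) + m < q then M ⟨r + m, h⟩ s
      else Complex.exp (2 * Real.pi * Complex.I * ξ) * M ⟨r + m - q, by omega⟩ s := by
  simp only [Matrix.mul_apply, Umat]
  by_cases h : (r : ℕ) + m < q
  · have hj : ∀ j : Fin q, ((j : ℕ) = r + m ↔ j = ⟨r + m, h⟩) := fun j => by
      rw [Fin.ext_iff]
    simp [h, show (r : ℕ) < q - m by omega, hj]
  · have hj : ∀ j : Fin q, ((j : ℕ) + (q - m) = r ↔ j = ⟨r + m - q, by omega⟩) := fun j => by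
      simp only [Fin.ext_iff]; omega
    simp [h, show ¬ (r : ℕ) < q - m by omega, hj]

theorem stmt_13_general (a b : ℝ) (ha : 1 < a) (hb : 1 < b) (p q : ℕ)
    (hq : 0 < q)
    (hlog : Real.logb b a = (p : ℝ) / q) (β : ℝ) (hβ : β = b ^ p)
    (ψ : ℝ → ℂ)
    (l : ℤ) (m : ℕ) (hm : m < q) :
    ∀ᵐ z ∂((volume : Measure (ℝ × ℝ)).restrict (Ioi (0 : ℝ) ×ˢ (univ : Set ℝ))),
      psiMatrix a b β p q ψ (a ^ (l * q + m : ℤ) * z.1) z.2 =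
        (((Real.sqrt (a ^ (l * q + m : ℤ)) : ℂ))⁻¹ *
            Complex.exp (2 * Real.pi * Complex.I * (l : ℂ) * (z.2 : ℂ))) •
          (Umat q m z.2 * psiMatrix a b β p q ψ z.1 z.2) := by
  have ha0 : 0 < a := one_pos.trans ha
  obtain rfl : β = a ^ q :=
    hβ.trans (pow_eq_pow_of_logb_eq ha0 (one_pos.trans hb) hb.ne' hq.ne' hlog).symm
  refine Filter.Eventually.of_forall fun z => ?_
  ext r s
  rw [Matrix.smul_apply, Umat_mul_apply hm, smul_eq_mul]
  split_ifs with h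
  · rw [psiMatrix_zpow_mul_apply ha0 b p q ψ z.1 z.2 (K := l) (r' := ⟨r + m, h⟩) s
      (by push_cast; ring)]
  · have hr : q ≤ (r : ℕ) + m := not_lt.1 h
    rw [psiMatrix_zpow_mul_apply ha0 b p q ψ z.1 z.2 (K := l + 1) (r' := ⟨r + m - q, by omega⟩) s
      (by push_cast [Nat.cast_sub hr]; ring), Int.cast_add, Int.cast_one, mul_add_one, add_mul,
      Complex.exp_add]
    ring

theorem stmt_13 (a b : ℝ) (ha : 1 < a) (hb : 1 < b) (p q : ℕ)
    (hp : 0 < p) (hq : 0 < q) (hco : Nat.Coprime p q)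
    (hlog : Real.logb b a = (p : ℝ) / q) (β : ℝ) (hβ : β = b ^ p)
    (ψ : ℝ → ℂ) (hψ : MemLp ψ 2 (volume.restrict (Ioi (0 : ℝ))))
    (l : ℤ) (m : ℕ) (hm : m < q) :
    ∀ᵐ z ∂((volume : Measure (ℝ × ℝ)).restrict (Ioi (0 : ℝ) ×ˢ (univ : Set ℝ))),
      psiMatrix a b β p q ψ (a ^ (l * q + m : ℤ) * z.1) z.2 =
        (((Real.sqrt (a ^ (l * q + m : ℤ)) : ℂ))⁻¹ *
            Complex.exp (2 * Real.pi * Complex.I * (l : ℂ) * (z.2 : ℂ))) •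
          (Umat q m z.2 * psiMatrix a b β p q ψ z.1 z.2) :=
  stmt_13_general a b ha hb p q hq hlog β hβ ψ l m hm
end

section
/- Let a, b > 1 with log_b a = p/q, p, q > 1 coprime, β = b^p, ψ ∈ L²((0,∞)) with Θ_β-transform matrix Ψ. Let (r', s') ∈ {1,...,q−1} × {1,...,p−1} be the unique pair with pr' + qs' = pq + 1, and define L_q(ξ) = [[0, I_{q−r'}],[e^{2πiξ} I_{r'}, 0]] and R_p(ξ) = [[0, I_{s'}],[e^{−2πiξ} I_{p−s'}, 0]]. Then Ψ(a^{1/p} x, ξ) = a^{−1/(2p)} L_q(ξ) Ψ(x, ξ) R_p(ξ) for a.e. (x, ξ) ∈ (0,∞) × ℝ. -/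
/-
With `γ = a^{1/p}` we have `a = γ^p`, `b = γ^q`, `β = γ^{pq}`, so every entry of `Ψ` is a value
`Ψ_{r,s}(x,ξ) = g_x(pr + qs)` of the sequence `g_x(n) = γ^{n/2} Θ_β ψ(γ^n x, ξ)` (`thetaOrbit`). This
sequence satisfies `g_{γx}(n) = γ^{-1/2} g_x(n+1)`, and `g_x(n + pqk) = e^{2πikξ} g_x(n)` because
`Θ_β` is quasi-periodic under `x ↦ βx`. Since `pr' + qs' = pq + 1`, the entry `(r,s)` of
`Ψ(γx, ξ)` is, up to `γ^{-1/2}` and a phase, `g_x` at `p(r+r') + q(s+s')`; reducing `r + r'` mod `q`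
and `s + s'` mod `p` is what `L_q` and `R_p` do, and their entries `e^{±2πiξ}` supply the phase.
The identity therefore holds for every `(x, ξ)`.
-/

open Set MeasureTheory Complex

/-- `L_q(ξ) = [[0, I_{q-r'}], [e^{2πiξ} I_{r'}, 0]]`. -/
noncomputable def Lmat (q r' : ℕ) (ξ : ℝ) : Matrix (Fin q) (Fin q) ℂ :=
  fun i j =>
    if (i : ℕ) < q - r' then (if (j : ℕ) = (i : ℕ) + r' then 1 else 0)
    else (if (j : ℕ) + (q - r') = (i : ℕ) then
      Complex.exp (2 * Real.pi * Complex.I * (ξ : ℂ)) else 0)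

/-- `R_p(ξ) = [[0, I_{s'}], [e^{-2πiξ} I_{p-s'}, 0]]`. -/
noncomputable def Rmat (p s' : ℕ) (ξ : ℝ) : Matrix (Fin p) (Fin p) ℂ :=
  fun i j =>
    if (i : ℕ) < s' then (if (j : ℕ) = (i : ℕ) + (p - s') then 1 else 0)
    else (if (j : ℕ) + s' = (i : ℕ) then
      Complex.exp (-(2 * Real.pi * Complex.I * (ξ : ℂ))) else 0)

theorem thetaTransform_zpow_mul {β : ℝ} (hβ : 0 < β) (f : ℝ → ℂ) (x ξ : ℝ) (k : ℤ) :
    (Real.sqrt (β ^ k) : ℂ) * thetaTransform β f (β ^ k * x) ξ =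
      Complex.exp (2 * Real.pi * Complex.I * ξ) ^ k * thetaTransform β f x ξ := by
  unfold thetaTransform
  rw [← tsum_mul_left, ← tsum_mul_left, ← (Equiv.subRight k).tsum_eq]
  refine tsum_congr fun l => ?_
  have hβl : β ^ (l - k) * β ^ k = β ^ l := by rw [← zpow_add₀ hβ.ne', sub_add_cancel]
  have hsqrt : Real.sqrt (β ^ k) * Real.sqrt (β ^ (l - k)) = Real.sqrt (β ^ l) := by
    rw [← Real.sqrt_mul (zpow_pos hβ k).le, mul_comm, hβl]
  have hexp : Complex.exp (-(2 * Real.pi * Complex.I * ((l - k : ℤ) : ℂ) * ξ)) =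
      Complex.exp (2 * Real.pi * Complex.I * ξ) ^ k *
        Complex.exp (-(2 * Real.pi * Complex.I * (l : ℂ) * ξ)) := by
    rw [← Complex.exp_int_mul, ← Complex.exp_add]; push_cast; ring_nf
  simp only [Equiv.subRight_apply]
  rw [← mul_assoc (β ^ (l - k)), hβl, hexp, ← hsqrt]
  push_cast
  ring

noncomputable def thetaOrbit (β γ : ℝ) (f : ℝ → ℂ) (x ξ : ℝ) (n : ℤ) : ℂ :=
  (Real.sqrt (γ ^ n) : ℂ) * thetaTransform β f (γ ^ n * x) ξ

section thetaOrbit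

variable {β γ : ℝ} (f : ℝ → ℂ) (x ξ : ℝ)

theorem thetaOrbit_add_mul (hγ : 0 < γ) {m : ℕ} (hγm : γ ^ m = β) (n k : ℤ) :
    thetaOrbit β γ f x ξ (n + m * k) =
      Complex.exp (2 * Real.pi * Complex.I * ξ) ^ k * thetaOrbit β γ f x ξ n := by
  have hpow : γ ^ (n + m * k) = β ^ k * γ ^ n := by
    rw [zpow_add₀ hγ.ne', zpow_mul, zpow_natCast, hγm, mul_comm]
  have hβ : 0 < β := hγm ▸ pow_pos hγ m
  rw [thetaOrbit, thetaOrbit, hpow, Real.sqrt_mul (zpow_pos hβ k).le, mul_assoc,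
    Complex.ofReal_mul, mul_assoc, mul_left_comm, thetaTransform_zpow_mul hβ, mul_left_comm]

theorem sqrt_mul_thetaOrbit_mul (hγ : 0 < γ) (n : ℤ) :
    (Real.sqrt γ : ℂ) * thetaOrbit β γ f (γ * x) ξ n = thetaOrbit β γ f x ξ (n + 1) := by
  rw [thetaOrbit, thetaOrbit, zpow_add_one₀ hγ.ne', Real.sqrt_mul (zpow_pos hγ n).le,
    ← mul_assoc (γ ^ n), Complex.ofReal_mul]
  ring

theorem psiMatrix_apply_eq_thetaOrbit {a b : ℝ} {p q : ℕ} (ha : a = γ ^ p)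
    (hb : b = γ ^ q) (r : Fin q) (s : Fin p) :
    psiMatrix a b β p q f x ξ r s = thetaOrbit β γ f x ξ (p * (r : ℕ) + q * (s : ℕ)) := by
  have : a ^ (r : ℕ) * b ^ (s : ℕ) = γ ^ ((p : ℤ) * (r : ℕ) + q * (s : ℕ)) := by
    rw [ha, hb, ← pow_mul, ← pow_mul, ← pow_add]; norm_cast
  rw [psiMatrix, thetaOrbit, this]

end thetaOrbit

theorem Nat.div_eq_one_and_mod_eq_sub {m n : ℕ} (h₁ : n ≤ m) (h₂ : m < 2 * n) :
    m / n = 1 ∧ m % n = m - n := by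
  have hdiv : m / n = 1 := Nat.div_eq_of_lt_le (by omega) (by omega)
  exact ⟨hdiv, by rw [Nat.mod_eq_sub, hdiv]; omega⟩

section Matrices

variable (ξ : ℝ)

theorem Lmat_apply {q r' : ℕ} (hr' : r' ≤ q) (i j : Fin q) :
    Lmat q r' ξ i j = if j = ⟨(i + r') % q, Nat.mod_lt _ i.pos⟩ then
      Complex.exp (2 * Real.pi * Complex.I * ξ) ^ ((i + r') / q) else 0 := by
  simp only [Fin.ext_iff]
  rcases lt_or_ge ((i : ℕ) + r') q with h | h
  · simp only [Nat.mod_eq_of_lt h, Nat.div_eq_of_lt h, Lmat, pow_zero]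
    split_ifs <;> first | rfl | omega
  · obtain ⟨hdiv, hmod⟩ := Nat.div_eq_one_and_mod_eq_sub h (by omega)
    simp only [hmod, hdiv, Lmat, pow_one]
    split_ifs <;> first | rfl | omega

theorem Rmat_apply {p s' : ℕ} (hs' : s' ≤ p) (k j : Fin p) :
    Rmat p s' ξ k j = if k = ⟨(j + s') % p, Nat.mod_lt _ j.pos⟩ then
      Complex.exp (2 * Real.pi * Complex.I * ξ) ^ (((j + s') / p : ℕ) - 1 : ℤ) else 0 := by
  simp only [Fin.ext_iff]
  rcases lt_or_ge ((j : ℕ) + s') p with h | h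
  · simp only [Nat.mod_eq_of_lt h, Nat.div_eq_of_lt h, Rmat, Nat.cast_zero, zero_sub, zpow_neg_one,
      ← Complex.exp_neg]
    split_ifs <;> first | rfl | omega
  · obtain ⟨hdiv, hmod⟩ := Nat.div_eq_one_and_mod_eq_sub h (by omega)
    simp only [hmod, hdiv, Rmat, Nat.cast_one, sub_self, zpow_zero]
    split_ifs <;> first | rfl | omega

theorem Lmat_mul_mul_Rmat_apply {q r' p s' : ℕ} (hr' : r' ≤ q) (hs' : s' ≤ p)
    (M : Matrix (Fin q) (Fin p) ℂ) (i : Fin q) (j : Fin p) :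
    (Lmat q r' ξ * M * Rmat p s' ξ) i j =
      Complex.exp (2 * Real.pi * Complex.I * ξ) ^ (((i + r') / q + (j + s') / p : ℕ) - 1 : ℤ) *
        M ⟨(i + r') % q, Nat.mod_lt _ i.pos⟩ ⟨(j + s') % p, Nat.mod_lt _ j.pos⟩ := by
  simp only [Matrix.mul_apply, Lmat_apply ξ hr', Rmat_apply ξ hs', ite_mul, mul_ite, zero_mul,
    mul_zero, Finset.sum_ite_eq', Finset.mem_univ, if_true]
  rw [Nat.cast_add, add_sub_assoc, zpow_add₀ (Complex.exp_ne_zero _), zpow_natCast]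
  ring

end Matrices

theorem stmt_14_general (a b : ℝ) (ha : 1 < a) (hb : 1 < b) (p q : ℕ)
    (hp : 1 < p) (hq : 1 < q)
    (hlog : Real.logb b a = (p : ℝ) / q) (β : ℝ) (hβ : β = b ^ p)
    (ψ : ℝ → ℂ)
    (r' s' : ℕ) (hr' : 1 ≤ r' ∧ r' ≤ q - 1) (hs' : 1 ≤ s' ∧ s' ≤ p - 1)
    (hrs : p * r' + q * s' = p * q + 1) :
    ∀ᵐ z ∂((volume : Measure (ℝ × ℝ)).restrict (Ioi (0 : ℝ) ×ˢ (univ : Set ℝ))),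
      psiMatrix a b β p q ψ (a ^ ((1 : ℝ) / p) * z.1) z.2 =
        (((a ^ ((1 : ℝ) / (2 * p)) : ℝ) : ℂ))⁻¹ •
          (Lmat q r' z.2 * psiMatrix a b β p q ψ z.1 z.2 * Rmat p s' z.2) := by
  have ha0 : 0 < a := by linarith
  have hb0 : 0 < b := by linarith
  set γ := a ^ ((1 : ℝ) / p) with hγ_def
  have hγ : 0 < γ := Real.rpow_pos_of_pos ha0 _
  have haγ : a = γ ^ p := by rw [hγ_def, one_div, Real.rpow_inv_natCast_pow ha0.le (by omega)]
  have hbγ : b = γ ^ q := by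
    have hγb : γ = b ^ ((q : ℝ)⁻¹) := by
      rw [hγ_def, ← Real.rpow_logb hb0 hb.ne' ha0, hlog, ← Real.rpow_mul hb0.le]
      congr 1
      field_simp
    rw [hγb, Real.rpow_inv_natCast_pow hb0.le (by omega)]
  have hβγ : γ ^ (p * q) = β := by rw [hβ, hbγ, ← pow_mul, mul_comm]
  have hsqrtγ : a ^ ((1 : ℝ) / (2 * p)) = Real.sqrt γ := by
    rw [Real.sqrt_eq_rpow, hγ_def, ← Real.rpow_mul ha0.le]
    congr 1
    field_simp
  refine Filter.Eventually.of_forall fun z => ?_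
  ext i j
  have hsqrtγ_ne : (Real.sqrt γ : ℂ) ≠ 0 := Complex.ofReal_ne_zero.2 (Real.sqrt_pos.2 hγ).ne'
  rw [Matrix.smul_apply, Lmat_mul_mul_Rmat_apply _ (by omega) (by omega),
    psiMatrix_apply_eq_thetaOrbit _ _ _ haγ hbγ, psiMatrix_apply_eq_thetaOrbit _ _ _ haγ hbγ,
    hsqrtγ, smul_eq_mul, eq_inv_mul_iff_mul_eq₀ hsqrtγ_ne, sqrt_mul_thetaOrbit_mul _ _ _ hγ,
    ← thetaOrbit_add_mul _ _ _ hγ hβγ]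
  congr 1
  have hi := Nat.div_add_mod (i + r') q
  have hj := Nat.div_add_mod (j + s') p
  zify at hi hj hrs
  push_cast
  linear_combination -(p * hi) - q * hj - hrs

theorem stmt_14 (a b : ℝ) (ha : 1 < a) (hb : 1 < b) (p q : ℕ)
    (hp : 1 < p) (hq : 1 < q) (hco : Nat.Coprime p q)
    (hlog : Real.logb b a = (p : ℝ) / q) (β : ℝ) (hβ : β = b ^ p)
    (ψ : ℝ → ℂ) (hψ : MemLp ψ 2 (volume.restrict (Ioi (0 : ℝ))))
    (r' s' : ℕ) (hr' : 1 ≤ r' ∧ r' ≤ q - 1) (hs' : 1 ≤ s' ∧ s' ≤ p - 1)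
    (hrs : p * r' + q * s' = p * q + 1) :
    ∀ᵐ z ∂((volume : Measure (ℝ × ℝ)).restrict (Ioi (0 : ℝ) ×ˢ (univ : Set ℝ))),
      psiMatrix a b β p q ψ (a ^ ((1 : ℝ) / p) * z.1) z.2 =
        (((a ^ ((1 : ℝ) / (2 * p)) : ℝ) : ℂ))⁻¹ •
          (Lmat q r' z.2 * psiMatrix a b β p q ψ z.1 z.2 * Rmat p s' z.2) :=
  stmt_14_general a b ha hb p q hp hq hlog β hβ ψ r' s' hr' hs' hrs
end
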